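/- (Prediction stability, Lemma 2.) Fix an arbitrary matrix Φ ∈ ℝ^{k×k} and a symmetric positive definite matrix P ∈ ℝ^{k×k}. Define γ := λ_min(P − ΦᵀPΦ) ∈ ℝ. Then the squared P-weighted matrix norm of Φ satisfies ‖Φ‖²_P ≤ 1 − γ⁺/λ_max(P) + γ⁻/λ_min(P). -/

import Mathlib

open Matrix

/-- Smallest eigenvalue of a (Hermitian) real matrix; junk value 0 otherwise. -/
noncomputable def lMin {k : ℕ} (A : Matrix (Fin k) (Fin k) ℝ) : ℝ :=
  letI := Classical.propDecidable A.IsHermitian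
  if h : A.IsHermitian then ⨅ i, h.eigenvalues i else 0

/-- Largest eigenvalue of a (Hermitian) real matrix; junk value 0 otherwise. -/
noncomputable def lMax {k : ℕ} (A : Matrix (Fin k) (Fin k) ℝ) : ℝ :=
  letI := Classical.propDecidable A.IsHermitian
  if h : A.IsHermitian then ⨆ i, h.eigenvalues i else 0

/-- P-weighted squared vector norm `‖x‖_P² = xᵀ P x`. -/
def wq {k : ℕ} (P : Matrix (Fin k) (Fin k) ℝ) (x : Fin k → ℝ) : ℝ := x ⬝ᵥ P *ᵥ x

/-- Induced P-weighted matrix norm `‖A‖_P = sup_{x ≠ 0} ‖Ax‖_P / ‖x‖_P`. -/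
noncomputable def wMatNorm {k : ℕ} (P A : Matrix (Fin k) (Fin k) ℝ) : ℝ :=
  sSup {r : ℝ | ∃ x : Fin k → ℝ, x ≠ 0 ∧ r = Real.sqrt (wq P (A *ᵥ x)) / Real.sqrt (wq P x)}

/-!
Write `γ = λ_min(P − ΦᵀPΦ)`. Since `‖Φx‖_P² = ‖x‖_P² − xᵀ(P − ΦᵀPΦ)x` and
`xᵀ(P − ΦᵀPΦ)x ≥ γ‖x‖²`, it suffices to bound `γ‖x‖²` below by a multiple of `‖x‖_P²`.
The Rayleigh bounds `λ_min(P)‖x‖² ≤ ‖x‖_P² ≤ λ_max(P)‖x‖²` do this: for `γ ≥ 0` use the upper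
one, giving `γ‖x‖² ≥ (γ/λ_max(P))‖x‖_P²`, and for `γ < 0` the lower one, giving
`γ‖x‖² ≥ (γ/λ_min(P))‖x‖_P²`. The Rayleigh bounds follow from `A − c·1 = U diag(λᵢ − c) Uᵀ`,
which is positive semidefinite once `c` lies below every eigenvalue `λᵢ`.
-/

namespace Matrix.IsHermitian

variable {n : Type*} [Fintype n] [DecidableEq n] {A : Matrix n n ℝ}

theorem sub_smul_one_eq_conj (hA : A.IsHermitian) (c : ℝ) :
    A - c • 1 = (↑hA.eigenvectorUnitary : Matrix n n ℝ) * diagonal (fun i ↦ hA.eigenvalues i - c)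
      * star (↑hA.eigenvectorUnitary : Matrix n n ℝ) := by
  have hU : (↑hA.eigenvectorUnitary : Matrix n n ℝ)
      * star (↑hA.eigenvectorUnitary : Matrix n n ℝ) = 1 :=
    Unitary.mul_star_self_of_mem hA.eigenvectorUnitary.2
  conv_lhs => rw [hA.spectral_theorem]
  rw [Unitary.conjStarAlgAut_apply, RCLike.ofReal_real_eq_id, Function.id_comp, ← diagonal_sub,
    Matrix.mul_sub, Matrix.sub_mul, ← smul_one_eq_diagonal, Matrix.mul_smul, Matrix.mul_one,
    Matrix.smul_mul, hU]

theorem posSemidef_sub_smul_one (hA : A.IsHermitian) {c : ℝ} (hc : ∀ i, c ≤ hA.eigenvalues i) :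
    (A - c • 1).PosSemidef := by
  rw [hA.sub_smul_one_eq_conj, Unitary.isUnit_coe.posSemidef_star_right_conjugate_iff,
    posSemidef_diagonal_iff]
  exact fun i ↦ sub_nonneg.2 (hc i)

theorem posSemidef_smul_one_sub (hA : A.IsHermitian) {c : ℝ} (hc : ∀ i, hA.eigenvalues i ≤ c) :
    (c • 1 - A).PosSemidef := by
  rw [← neg_sub, hA.sub_smul_one_eq_conj, ← Matrix.neg_mul, ← Matrix.mul_neg, diagonal_neg,
    Unitary.isUnit_coe.posSemidef_star_right_conjugate_iff, posSemidef_diagonal_iff]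
  exact fun i ↦ by simpa using hc i

end Matrix.IsHermitian

theorem posPart_div_sub_negPart_div_mul_le {m M s q : ℝ} (hm : 0 < m) (hM : 0 < M)
    (hlo : m * s ≤ q) (hhi : q ≤ M * s) (γ : ℝ) :
    (max γ 0 / M - max (-γ) 0 / m) * q ≤ γ * s := by
  rcases le_total 0 γ with hγ | hγ
  · rw [max_eq_left hγ, max_eq_right (neg_nonpos.2 hγ), zero_div, sub_zero]
    calc γ / M * q ≤ γ / M * (M * s) := by gcongr
      _ = γ * s := by field_simp
  · rw [max_eq_right hγ, max_eq_left (neg_nonneg.2 hγ), zero_div, zero_sub, neg_mul]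
    calc -(-γ / m * q) ≤ -(-γ / m * (m * s)) :=
          neg_le_neg (mul_le_mul_of_nonneg_left hlo (div_nonneg (neg_nonneg.2 hγ) hm.le))
      _ = γ * s := by field_simp

section

variable {k : ℕ} {A P : Matrix (Fin k) (Fin k) ℝ}

theorem lMin_eq (hA : A.IsHermitian) : lMin A = ⨅ i, hA.eigenvalues i := dif_pos hA

theorem lMax_eq (hA : A.IsHermitian) : lMax A = ⨆ i, hA.eigenvalues i := dif_pos hA

theorem lMin_mul_dotProduct_self_le (hA : A.IsHermitian) (x : Fin k → ℝ) :
    lMin A * (x ⬝ᵥ x) ≤ x ⬝ᵥ A *ᵥ x := by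
  have h := (hA.posSemidef_sub_smul_one fun i ↦
    ciInf_le (Set.finite_range hA.eigenvalues).bddBelow i).dotProduct_mulVec_nonneg x
  simp only [star_trivial, sub_mulVec, smul_mulVec, one_mulVec, dotProduct_sub,
    dotProduct_smul, smul_eq_mul] at h
  rw [lMin_eq hA]
  linarith

theorem dotProduct_mulVec_le_lMax_mul (hA : A.IsHermitian) (x : Fin k → ℝ) :
    x ⬝ᵥ A *ᵥ x ≤ lMax A * (x ⬝ᵥ x) := by
  have h := (hA.posSemidef_smul_one_sub fun i ↦
    le_ciSup (Set.finite_range hA.eigenvalues).bddAbove i).dotProduct_mulVec_nonneg x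
  simp only [star_trivial, sub_mulVec, smul_mulVec, one_mulVec, dotProduct_sub,
    dotProduct_smul, smul_eq_mul] at h
  rw [lMax_eq hA]
  linarith

theorem lMin_pos [Nonempty (Fin k)] (hA : A.PosDef) : 0 < lMin A := by
  obtain ⟨i, hi⟩ := exists_eq_ciInf_of_finite (f := hA.1.eigenvalues)
  rw [lMin_eq hA.1, ← hi]
  exact hA.eigenvalues_pos i

theorem lMax_pos [Nonempty (Fin k)] (hA : A.PosDef) : 0 < lMax A := by
  obtain ⟨i⟩ := ‹Nonempty (Fin k)›
  rw [lMax_eq hA.1]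
  exact (hA.eigenvalues_pos i).trans_le (le_ciSup (Set.finite_range _).bddAbove i)

theorem wq_mulVec (Φ : Matrix (Fin k) (Fin k) ℝ) (x : Fin k → ℝ) :
    wq P (Φ *ᵥ x) = x ⬝ᵥ (Φᵀ * P * Φ) *ᵥ x := by
  rw [wq, ← mulVec_mulVec, ← mulVec_mulVec, dotProduct_mulVec x Φᵀ, vecMul_transpose]

theorem wq_nonneg (hP : P.PosSemidef) (x : Fin k → ℝ) : 0 ≤ wq P x := by
  unfold wq
  simpa using hP.dotProduct_mulVec_nonneg x

theorem wq_pos (hP : P.PosDef) {x : Fin k → ℝ} (hx : x ≠ 0) : 0 < wq P x := by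
  unfold wq
  simpa using hP.dotProduct_mulVec_pos hx

theorem wMatNorm_nonneg : 0 ≤ wMatNorm P A :=
  Real.sSup_nonneg <| by
    rintro r ⟨x, -, rfl⟩
    positivity

theorem wMatNorm_le_sqrt (hP : P.PosSemidef) {C : ℝ} (h : ∀ x, wq P (A *ᵥ x) ≤ C * wq P x) :
    wMatNorm P A ≤ √C := by
  refine Real.sSup_le ?_ (Real.sqrt_nonneg C)
  rintro r ⟨x, -, rfl⟩
  refine div_le_of_le_mul₀ (Real.sqrt_nonneg _) (Real.sqrt_nonneg C) ?_
  rw [← Real.sqrt_mul' C (wq_nonneg hP x)]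
  exact Real.sqrt_le_sqrt (h x)

theorem wMatNorm_sq_le [Nonempty (Fin k)] (hP : P.PosDef) {C : ℝ}
    (h : ∀ x, wq P (A *ᵥ x) ≤ C * wq P x) : wMatNorm P A ^ 2 ≤ C := by
  obtain ⟨x, hx⟩ := exists_ne (0 : Fin k → ℝ)
  have hC : 0 ≤ C :=
    nonneg_of_mul_nonneg_left ((wq_nonneg hP.posSemidef _).trans (h x)) (wq_pos hP hx)
  exact (Real.le_sqrt wMatNorm_nonneg hC).1 (wMatNorm_le_sqrt hP.posSemidef h)

theorem wq_mulVec_le [Nonempty (Fin k)] (hP : P.PosDef) (Φ : Matrix (Fin k) (Fin k) ℝ)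
    (x : Fin k → ℝ) :
    wq P (Φ *ᵥ x) ≤ (1 - max (lMin (P - Φᵀ * P * Φ)) 0 / lMax P
        + max (-lMin (P - Φᵀ * P * Φ)) 0 / lMin P) * wq P x := by
  have hA : (P - Φᵀ * P * Φ).IsHermitian := by
    simpa using hP.1.sub (isHermitian_conjTranspose_mul_mul Φ hP.1)
  have hγ := lMin_mul_dotProduct_self_le hA x
  rw [sub_mulVec, dotProduct_sub, ← wq_mulVec, ← wq] at hγ
  have hbound := posPart_div_sub_negPart_div_mul_le (lMin_pos hP) (lMax_pos hP)
    (lMin_mul_dotProduct_self_le hP.1 x) (dotProduct_mulVec_le_lMax_mul hP.1 x)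
    (lMin (P - Φᵀ * P * Φ))
  rw [← wq] at hbound
  linarith

end

/-- Lemma 2 (Prediction stability): for any `Φ ∈ ℝ^{k×k}` and symmetric positive definite `P`,
with `γ := λ_min(P − ΦᵀPΦ)`, one has `‖Φ‖²_P ≤ 1 − γ⁺/λ_max(P) + γ⁻/λ_min(P)`. -/
theorem prediction_stability {k : ℕ} (Φ P : Matrix (Fin k) (Fin k) ℝ) (hP : P.PosDef) :
    wMatNorm P Φ ^ 2 ≤
      1 - max (lMin (P - Φᵀ * P * Φ)) 0 / lMax P
        + max (-lMin (P - Φᵀ * P * Φ)) 0 / lMin P := by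
  rcases isEmpty_or_nonempty (Fin k) with hk | hk
  · -- For `k = 0` the supremum is over the empty set and the eigenvalue extrema are `0`.
    have h0 : wMatNorm P Φ = 0 :=
      le_antisymm (by simpa using wMatNorm_le_sqrt (C := 0) hP.posSemidef (by simp [wq]))
        wMatNorm_nonneg
    simp [h0, lMax_eq hP.1, lMin_eq hP.1]
  · exact wMatNorm_sq_le hP (wq_mulVec_le hP Φ)
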